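/- Let A = ⟨Q, Σ⟩ be a completely reachable DFA with |Q| = n ≥ 2. Then for every state q ∈ Q there exists a word w ∈ Σ* of length at most n such that q ∉ Q·w. -/
import Mathlib


open Finset

/-- The action of a word (list of letters) on a state, applying letters left to right. -/
def act {Q A : Type*} (δ : Q → A → Q) (q : Q) (w : List A) : Q := w.foldl δ q

/-- The image of a set of states under the action of a word. -/
def img {Q A : Type*} [DecidableEq Q] (δ : Q → A → Q) (P : Finset Q) (w : List A) : Finset Q :=
  P.image (fun q => act δ q w)

/-- `excl δ w = Q \ Q·w`. -/
def excl {Q A : Type*} [Fintype Q] [DecidableEq Q] (δ : Q → A → Q) (w : List A) : Finset Q :=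
  Finset.univ \ img δ Finset.univ w

/-- `dupl δ w` : the set of states with at least two preimages under the action of `w`. -/
def dupl {Q A : Type*} [Fintype Q] [DecidableEq Q] (δ : Q → A → Q) (w : List A) : Finset Q :=
  Finset.univ.filter (fun p => ∃ q₁ q₂ : Q, q₁ ≠ q₂ ∧ act δ q₁ w = p ∧ act δ q₂ w = p)

/-- A DFA is completely reachable if every nonempty subset of states is the image of the
full state set under the action of some word. -/
def CompletelyReachable {Q A : Type*} [Fintype Q] [DecidableEq Q] (δ : Q → A → Q) : Prop :=
  ∀ P : Finset Q, P.Nonempty → ∃ w : List A, img δ Finset.univ w = P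

/-- `q` is avoided by some word of length at most `k`. -/
def Avoid {Q A : Type*} [Fintype Q] [DecidableEq Q] (δ : Q → A → Q) (k : ℕ) (q : Q) : Prop :=
  ∃ w : List A, w.length ≤ k ∧ q ∉ img δ Finset.univ w

lemma act_append {Q A : Type*} (δ : Q → A → Q) (q : Q) (u v : List A) :
    act δ q (u ++ v) = act δ (act δ q u) v := by simp [act, List.foldl_append]

lemma img_append {Q A : Type*} [DecidableEq Q] (δ : Q → A → Q) (P : Finset Q) (u v : List A) :
    img δ P (u ++ v) = img δ (img δ P u) v := by
  unfold img
  rw [Finset.image_image]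
  congr 1
  funext q
  exact act_append δ q u v

lemma avoid_mono {Q A : Type*} [Fintype Q] [DecidableEq Q] (δ : Q → A → Q) {k m : ℕ}
    (hkm : k ≤ m) {q : Q} : Avoid δ k q → Avoid δ m q :=
  fun ⟨w, h1, h2⟩ => ⟨w, h1.trans hkm, h2⟩

/-- Walk lemma: if `x` is outside the image of a word whose image has at least `n-1` states,
and `x` is not avoidable within `k`, then some state avoidable within `k+1` is not within `k`. -/
lemma walk {Q A : Type*} [Fintype Q] [DecidableEq Q] (δ : Q → A → Q) (k : ℕ) :
    ∀ (w : List A) (x : Q), Fintype.card Q - 1 ≤ (img δ Finset.univ w).card →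
      x ∉ img δ Finset.univ w → ¬ Avoid δ k x →
      ∃ y : Q, ¬ Avoid δ k y ∧ Avoid δ (k + 1) y := by
  intro w
  induction w using List.reverseRecOn with
  | nil =>
    intro x hcard hx hnav
    exact absurd (Finset.mem_image_of_mem _ (Finset.mem_univ x)) hx
  | append_singleton u a ih =>
    intro x hcard hx hnav
    have himg : img δ Finset.univ (u ++ [a]) = img δ (img δ Finset.univ u) [a] :=
      img_append δ _ u [a]
    have hcard_u : Fintype.card Q - 1 ≤ (img δ Finset.univ u).card := by
      refine hcard.trans ?_
      rw [himg]
      exact Finset.card_image_le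
    rw [himg] at hx
    by_cases hU : img δ Finset.univ u = Finset.univ
    · rw [hU] at hx
      exact ⟨x, hnav, [a], by simp, hx⟩
    · -- the image of u misses exactly one state y
      have hUcardlt : (img δ Finset.univ u).card < Fintype.card Q := by
        rw [← Finset.card_univ]
        exact Finset.card_lt_card (Finset.ssubset_univ_iff.mpr hU)
      have hdiff : (Finset.univ \ img δ Finset.univ u).card = 1 := by
        rw [Finset.card_sdiff_of_subset (Finset.subset_univ _), Finset.card_univ]
        omega
      obtain ⟨y, hy⟩ := Finset.card_eq_one.mp hdiff
      have hyU : y ∉ img δ Finset.univ u := by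
        have : y ∈ Finset.univ \ img δ Finset.univ u := by rw [hy]; exact Finset.mem_singleton_self y
        exact (Finset.mem_sdiff.mp this).2
      have hall : ∀ p : Q, p ∉ img δ Finset.univ u → p = y := by
        intro p hp
        have : p ∈ Finset.univ \ img δ Finset.univ u :=
          Finset.mem_sdiff.mpr ⟨Finset.mem_univ p, hp⟩
        rw [hy] at this
        exact Finset.mem_singleton.mp this
      by_cases hyav : Avoid δ k y
      · obtain ⟨v, hvlen, hvy⟩ := hyav
        refine ⟨x, hnav, v ++ [a], by simpa using Nat.succ_le_succ hvlen, ?_⟩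
        rw [img_append]
        intro hmem
        obtain ⟨p, hp, hpx⟩ := Finset.mem_image.mp hmem
        -- p ∈ img univ v and act δ p [a] = x
        have hpU : p ∉ img δ Finset.univ u := by
          intro hpU
          exact hx (Finset.mem_image.mpr ⟨p, hpU, hpx⟩)
        have : p = y := hall p hpU
        rw [this] at hp
        exact hvy hp
      · exact ih y hcard_u hyU hyav

lemma grow {Q A : Type*} [Fintype Q] [DecidableEq Q] (δ : Q → A → Q)
    (hn : 2 ≤ Fintype.card Q) (h : CompletelyReachable δ) (k : ℕ) (q : Q)
    (hq : ¬ Avoid δ k q) : ∃ y : Q, ¬ Avoid δ k y ∧ Avoid δ (k + 1) y := by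
  obtain ⟨p, hp⟩ := Fintype.exists_ne_of_one_lt_card (by omega) q
  have hne : (Finset.univ \ ({q} : Finset Q)).Nonempty :=
    ⟨p, Finset.mem_sdiff.mpr ⟨Finset.mem_univ p, by simp [hp]⟩⟩
  obtain ⟨w, hw⟩ := h (Finset.univ \ {q}) hne
  refine walk δ k w q ?_ ?_ hq
  · rw [hw, Finset.card_sdiff_of_subset (Finset.subset_univ _), Finset.card_univ, Finset.card_singleton]
  · rw [hw]; simp

/-- In a completely reachable DFA with n ≥ 2 states, every state is avoided by a word of
length at most n. -/
theorem avoiding_word {Q A : Type*} [Fintype Q] [DecidableEq Q]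
    (δ : Q → A → Q) (hn : 2 ≤ Fintype.card Q) (h : CompletelyReachable δ) :
    ∀ q : Q, ∃ w : List A, w.length ≤ Fintype.card Q ∧ q ∉ img δ Finset.univ w := by
  classical
  intro q
  by_contra hq'
  have hq : ¬ Avoid δ (Fintype.card Q) q := hq'
  set n := Fintype.card Q with hn_def
  set F : ℕ → Finset Q := fun k => Finset.univ.filter (fun x => Avoid δ k x) with hF
  have key : ∀ k : ℕ, k ≤ n → k ≤ (F k).card := by
    intro k
    induction k with
    | zero => intro _; exact Nat.zero_le _
    | succ k ihk =>
      intro hk1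
      have hk : k ≤ n := by omega
      have hFk : k ≤ (F k).card := ihk hk
      have hnavq : ¬ Avoid δ k q := fun hav => hq (avoid_mono δ hk hav)
      obtain ⟨y, hy1, hy2⟩ := grow δ hn h k q hnavq
      have hyF : y ∉ F k := by simp [hF, hy1]
      have hins : insert y (F k) ⊆ F (k + 1) := by
        intro z hz
        rcases Finset.mem_insert.mp hz with hz | hz
        · subst hz; simp [hF, hy2]
        · have : Avoid δ k z := (Finset.mem_filter.mp hz).2
          simp [hF, avoid_mono δ (Nat.le_succ k) this]
      calc k + 1 ≤ (F k).card + 1 := by omega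
        _ = (insert y (F k)).card := (Finset.card_insert_of_notMem hyF).symm
        _ ≤ (F (k + 1)).card := Finset.card_le_card hins
  have hfin : n ≤ (F n).card := key n le_rfl
  have hle : (F n).card ≤ n := by
    rw [hn_def]
    rw [← Finset.card_univ]
    exact Finset.card_le_card (Finset.filter_subset _ _)
  have : F n = Finset.univ := Finset.eq_univ_of_card _ (le_antisymm hle hfin)
  have hqF : q ∈ F n := this ▸ Finset.mem_univ q
  exact hq (Finset.mem_filter.mp hqF).2
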